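/- arXiv:1306.3602 — 4 statements merged into one kernel-verified Lean document; each statement's English description precedes it below -/
import Mathlib

section
/- Let F be a field of characteristic 2 and let V be a finite multiset of vectors in Z_2^k that is linearly dependent over Z_2 (i.e., some nonempty subset sums to zero mod 2). Then in the group algebra F[Z_2^k], the product ∏_{v ∈ V} (v + v_0) equals 0. -/
section Aux

variable (k : ℕ) (F : Type*) [Field F] [CharP F 2]

private noncomputable def stmt4f (v : Fin k → ZMod 2) : AddMonoidAlgebra F (Fin k → ZMod 2) :=
  AddMonoidAlgebra.single v (1 : F) + AddMonoidAlgebra.single 0 1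

private lemma stmt4_pair (a b : Fin k → ZMod 2) :
    stmt4f k F a * stmt4f k F b = stmt4f k F (a + b) * stmt4f k F b := by
  have hb : b + b = 0 := by
    ext i; exact CharTwo.add_self_eq_zero _
  simp only [stmt4f, add_mul, mul_add, AddMonoidAlgebra.single_mul_single, one_mul, mul_one,
    add_zero, zero_add]
  rw [show a + b + b = a by rw [add_assoc, hb, add_zero]]
  abel

private lemma stmt4_fold (a : Fin k → ZMod 2) (T : Multiset (Fin k → ZMod 2)) :
    stmt4f k F a * (T.map (stmt4f k F)).prod
      = stmt4f k F (a + T.sum) * (T.map (stmt4f k F)).prod := by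
  induction T using Multiset.induction_on with
  | empty => simp
  | cons b T ih =>
    simp only [Multiset.map_cons, Multiset.prod_cons, Multiset.sum_cons]
    rw [mul_left_comm, ih, ← mul_assoc, mul_comm (stmt4f k F b), stmt4_pair,
      show a + T.sum + b = a + (b + T.sum) from by abel, mul_assoc]

private lemma stmt4_zero : stmt4f k F 0 = 0 := by
  rw [stmt4f, ← AddMonoidAlgebra.single_add]
  have : (1 : F) + 1 = 0 := CharTwo.add_self_eq_zero 1
  rw [this, AddMonoidAlgebra.single_zero]

end Aux

theorem stmt_4 (k : ℕ) (F : Type*) [Field F] [CharP F 2]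
    (V : Multiset (Fin k → ZMod 2))
    (hdep : ∃ T ≤ V, T ≠ 0 ∧ T.sum = 0) :
    ((V.map fun v => (AddMonoidAlgebra.single v (1 : F) + AddMonoidAlgebra.single 0 1 :
      AddMonoidAlgebra F (Fin k → ZMod 2)))).prod = 0 := by
  obtain ⟨T, hTV, hT0, hTsum⟩ := hdep
  obtain ⟨U, rfl⟩ := Multiset.le_iff_exists_add.mp hTV
  have hfun : (fun v => (AddMonoidAlgebra.single v (1 : F) + AddMonoidAlgebra.single 0 1 :
      AddMonoidAlgebra F (Fin k → ZMod 2))) = stmt4f k F := rfl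
  rw [hfun, Multiset.map_add, Multiset.prod_add]
  obtain ⟨a, ha⟩ := Multiset.exists_mem_of_ne_zero hT0
  obtain ⟨T', rfl⟩ := Multiset.exists_cons_of_mem ha
  rw [Multiset.map_cons, Multiset.prod_cons, stmt4_fold]
  rw [show a + T'.sum = 0 from by simpa using hTsum, stmt4_zero, zero_mul, zero_mul]
end

section
/- Let F be a field of characteristic 2 and v_1, ..., v_m distinct elements of a finite multiset of vectors in Z_2^k with m > k. Then ∏_{i=1}^m (v_i + v_0) = 0 in the group algebra F[Z_2^k]. -/
theorem stmt_8 (k m : ℕ) (F : Type*) [Field F] [CharP F 2]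
    (v : Fin m → (Fin k → ZMod 2)) (hv : Function.Injective v) (hm : k < m) :
    (∏ i : Fin m, (AddMonoidAlgebra.single (v i) (1 : F) + AddMonoidAlgebra.single 0 1 :
      AddMonoidAlgebra F (Fin k → ZMod 2))) = 0 := by
  classical
  have hone : ∀ a : ZMod 2, a ≠ 0 → a = 1 := by decide
  have htwo : ∀ x : Fin k → ZMod 2, x + x = 0 := by
    intro x; ext j; exact CharTwo.add_self_eq_zero _
  -- the vectors are linearly dependent
  have hdep : ¬ LinearIndependent (ZMod 2) v := by
    intro h
    have h2 := h.fintype_card_le_finrank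
    rw [Fintype.card_fin] at h2
    have h3 : Module.finrank (ZMod 2) (Fin k → ZMod 2) = k := by
      simp [Module.finrank_pi]
    omega
  obtain ⟨g, hg0, i0, hi0⟩ := Fintype.not_linearIndependent_iff.mp hdep
  set S : Finset (Fin m) := Finset.univ.filter (fun i => g i ≠ 0) with hS
  have hSne : S.Nonempty := ⟨i0, by simp [hS, hi0]⟩
  have hsum : ∑ i ∈ S, v i = 0 := by
    have e1 : ∑ i ∈ S, v i = ∑ i ∈ S, g i • v i := by
      apply Finset.sum_congr rfl
      intro i hi
      simp only [hS, Finset.mem_filter] at hi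
      rw [hone _ hi.2, one_smul]
    have e2 : ∑ i ∈ S, g i • v i = ∑ i : Fin m, g i • v i := by
      apply Finset.sum_subset (Finset.subset_univ S)
      intro i _ hi
      simp only [hS, Finset.mem_filter, Finset.mem_univ, true_and, not_not] at hi
      rw [hi, zero_smul]
    rw [e1, e2, hg0]
  have hprodS : ∏ i ∈ S, (AddMonoidAlgebra.single (v i) (1 : F) + AddMonoidAlgebra.single 0 1 :
      AddMonoidAlgebra F (Fin k → ZMod 2)) = 0 := by
    rw [Finset.prod_add]
    have key : ∀ t ∈ S.powerset,
        (∏ i ∈ t, AddMonoidAlgebra.single (v i) (1 : F)) *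
          ∏ i ∈ S \ t, (AddMonoidAlgebra.single (0 : Fin k → ZMod 2) (1 : F))
        = AddMonoidAlgebra.single (∑ i ∈ t, v i) (1 : F) := by
      intro t _
      rw [AddMonoidAlgebra.prod_single, AddMonoidAlgebra.prod_single]
      simp [AddMonoidAlgebra.single_mul_single]
    rw [Finset.sum_congr rfl key]
    apply Finset.sum_involution (fun t _ => S \ t)
    · intro t ht
      simp only [Finset.mem_powerset] at ht
      have hsplit : ∑ i ∈ t, v i + ∑ i ∈ S \ t, v i = 0 := by
        rw [add_comm, Finset.sum_sdiff ht, hsum]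
      have heq : ∑ i ∈ S \ t, v i = ∑ i ∈ t, v i := by
        calc ∑ i ∈ S \ t, v i
            = ∑ i ∈ t, v i + ∑ i ∈ S \ t, v i + ∑ i ∈ t, v i := by
              rw [add_comm (∑ i ∈ t, v i), add_assoc, htwo, add_zero]
          _ = ∑ i ∈ t, v i := by rw [hsplit, zero_add]
      rw [heq, ← AddMonoidAlgebra.single_add]
      have hF : (1 : F) + 1 = 0 := by
        have h2 := CharP.cast_eq_zero F 2
        push_cast at h2
        linear_combination h2
      rw [hF, AddMonoidAlgebra.single_zero]
    · intro t ht _ heq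
      simp only [Finset.mem_powerset] at ht
      have hd : Disjoint t t := by
        conv_lhs => rw [← heq]
        exact Finset.sdiff_disjoint
      have htempty : t = ∅ := disjoint_self.mp hd
      rw [htempty, Finset.sdiff_empty] at heq
      exact hSne.ne_empty heq
    · intro t ht
      simp only [Finset.mem_powerset] at *
      exact Finset.sdiff_subset
    · intro t ht
      simp only [Finset.mem_powerset] at ht
      rw [Finset.sdiff_sdiff_self_left, Finset.inter_eq_right.mpr ht]
  calc (∏ i : Fin m, (AddMonoidAlgebra.single (v i) (1 : F) + AddMonoidAlgebra.single 0 1 :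
      AddMonoidAlgebra F (Fin k → ZMod 2)))
      = (∏ i ∈ S, (AddMonoidAlgebra.single (v i) (1 : F) + AddMonoidAlgebra.single 0 1)) *
        ∏ i ∈ Sᶜ, (AddMonoidAlgebra.single (v i) (1 : F) + AddMonoidAlgebra.single 0 1) :=
        (Finset.prod_mul_prod_compl S _).symm
    _ = 0 := by rw [hprodS, zero_mul]
end

section
/- Let U = U_1 × ... × U_m with U_1, ..., U_m pairwise disjoint finite sets, and let C ⊆ U. Partition C into sets C_1, ..., C_{n_1} according to the first component, where n_1 = |U_1|. Assign a variable x_u to every element u of U_2 ∪ ... ∪ U_m and introduce an extra variable z. For a tuple v = (u_1, ..., u_m), let π(v) = x_{u_2} ··· x_{u_m}. Define F(C, z) = ∏_{j=1}^{n_1} (1 + Σ_{v ∈ C_j} z·π(v)). Then C contains k tuples that are pairwise disjoint (no two share a component in any coordinate) if and only if the sum-product expansion of F(C,z) contains a monomial of the form z^k · π where π is a multilinear monomial of degree (m-1)k in the x-variables. -/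
/-!
Expanding the product, each factor `1 + ∑_{v ∈ C_j} z π(v)` contributes either `1` or a single
term `z π(v)`, so `F(C, z)` is the sum, over the sets `M ⊆ C` taking at most one tuple from each
`C_j`, of `z^|M| ∏_{v ∈ M} π(v)`. Every coefficient is `1`, so over `ℚ` nothing cancels and the
support is exactly the set of these exponents. For `|M| = k` the degree in the `x`-variables is
always `(m - 1) k`, and the monomial is multilinear iff no variable `x_u` is hit twice; since the
`U_i` are disjoint, two tuples can only produce the same `x_u` in the same coordinate, so this
says that the tuples of `M` are disjoint in coordinates `2, …, m`, while disjointness in the first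
coordinate is the condition of taking one tuple per `C_j`.
-/

open Finset MvPolynomial

section Expansion

variable {α β R : Type*} [DecidableEq α] [DecidableEq β] [CommSemiring R]

def partialTransversals (c : α → β) (C : Finset α) (s : Finset β) : Finset (Finset α) :=
  {M ∈ (C.filter (c · ∈ s)).powerset | ∀ a ∈ M, ∀ a' ∈ M, c a = c a' → a = a'}

lemma mem_partialTransversals {c : α → β} {C : Finset α} {s : Finset β} {M : Finset α} :
    M ∈ partialTransversals c C s ↔
      (∀ a ∈ M, a ∈ C ∧ c a ∈ s) ∧ ∀ a ∈ M, ∀ a' ∈ M, c a = c a' → a = a' := by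
  simp only [partialTransversals, mem_filter, mem_powerset, subset_iff]

lemma filter_partialTransversals_insert_avoiding (c : α → β) (C : Finset α) {b : β}
    {s : Finset β} (hb : b ∉ s) :
    {M ∈ partialTransversals c C (insert b s) | ∀ a ∈ M, c a ≠ b} =
      partialTransversals c C s := by
  ext M
  simp only [mem_filter, mem_partialTransversals, mem_insert]
  grind

lemma filter_partialTransversals_insert_meeting (c : α → β) (C : Finset α) {b : β}
    {s : Finset β} (hb : b ∉ s) :
    {M ∈ partialTransversals c C (insert b s) | ¬∀ a ∈ M, c a ≠ b} =
      ((C.filter (c · = b)) ×ˢ partialTransversals c C s).image fun p => insert p.1 p.2 := by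
  ext M
  simp only [mem_filter, mem_partialTransversals, mem_insert, mem_image, mem_product]
  constructor
  · rintro ⟨⟨hMC, hinj⟩, hmeet⟩
    push Not at hmeet
    obtain ⟨a, haM, rfl⟩ := hmeet
    refine ⟨(a, M.erase a), ⟨⟨(hMC a haM).1, rfl⟩, ?_, ?_⟩, insert_erase haM⟩ <;> grind
  · rintro ⟨⟨a, M'⟩, ⟨⟨haC, rfl⟩, hM'C, hinj⟩, rfl⟩
    grind

lemma injOn_insert_product_partialTransversals (c : α → β) (C : Finset α) {b : β}
    {s : Finset β} (hb : b ∉ s) :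
    Set.InjOn (fun p : α × Finset α => insert p.1 p.2)
      ↑((C.filter (c · = b)) ×ˢ partialTransversals c C s) := by
  rintro ⟨a, M⟩ h ⟨a', M'⟩ h' (heq : insert a M = insert a' M')
  simp only [coe_product, Set.mem_prod, mem_coe, mem_filter, mem_partialTransversals] at h h'
  obtain ⟨⟨-, hab⟩, hM, -⟩ := h
  obtain ⟨⟨-, ha'b⟩, hM', -⟩ := h'
  have ha : a ∉ M := fun haM => hb (hab ▸ (hM a haM).2)
  have ha' : a' ∉ M' := fun haM => hb (ha'b ▸ (hM' a' haM).2)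
  have haa' : a = a' := by
    have : a ∈ insert a' M' := heq ▸ mem_insert_self a M
    rcases mem_insert.mp this with h | h
    · exact h
    · exact absurd (hab ▸ (hM' a h).2) hb
  subst haa'
  simp only [Prod.mk.injEq, true_and]
  rw [← erase_insert ha, ← erase_insert ha', heq]

theorem prod_one_add_sum_fiber_eq_sum_partialTransversals (c : α → β) (w : α → R)
    (C : Finset α) (s : Finset β) :
    ∏ b ∈ s, (1 + ∑ a ∈ C with c a = b, w a) =
      ∑ M ∈ partialTransversals c C s, ∏ a ∈ M, w a := by
  induction s using Finset.induction_on with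
  | empty => simp [partialTransversals, filter_singleton]
  | insert b s hb ih =>
    rw [prod_insert hb, ih, ← sum_filter_add_sum_filter_not (partialTransversals c C (insert b s))
        (fun M => ∀ a ∈ M, c a ≠ b),
      filter_partialTransversals_insert_avoiding c C hb,
      filter_partialTransversals_insert_meeting c C hb,
      sum_image (injOn_insert_product_partialTransversals c C hb), one_add_mul, sum_mul,
      sum_product]
    congr 1
    refine sum_congr rfl fun a ha => ?_
    rw [mul_sum]
    refine sum_congr rfl fun M hM => (prod_insert fun haM => hb ?_).symm
    exact (mem_filter.mp ha).2 ▸ ((mem_partialTransversals.mp hM).1 a haM).2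

end Expansion

lemma mem_support_sum_monomial_one {ι σ R : Type*} [CommSemiring R] [CharZero R]
    (A : Finset ι) (D : ι → σ →₀ ℕ) (d : σ →₀ ℕ) :
    d ∈ (∑ M ∈ A, monomial (D M) (1 : R)).support ↔ ∃ M ∈ A, D M = d := by
  classical
  simp only [mem_support_iff, coeff_sum, coeff_monomial, sum_boole, ne_eq, Nat.cast_eq_zero,
    card_eq_zero, filter_eq_empty_iff, not_forall, not_not, exists_prop]

section TupleExponent

variable {ι V : Type*} [Fintype ι] [DecidableEq ι]

/-- The exponent of `z π(f)`: `none` indexes `z` and `some u` indexes `x_u`. -/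
noncomputable def tupleExponent (i₀ : ι) (f : ι → V) : Option V →₀ ℕ :=
  Finsupp.single none 1 + ∑ i ∈ univ.erase i₀, Finsupp.single (some (f i)) 1

lemma X_none_mul_prod_X_some_eq_monomial {R : Type*} [CommSemiring R] (i₀ : ι) (f : ι → V) :
    X none * ∏ i ∈ univ.erase i₀, X (some (f i)) =
      monomial (tupleExponent i₀ f) (1 : R) := by
  rw [tupleExponent, ← mul_one (1 : R), ← monomial_mul, monomial_sum_one]
  rfl

lemma sum_tupleExponent_none (i₀ : ι) (M : Finset (ι → V)) :
    (∑ f ∈ M, tupleExponent i₀ f) none = #M := by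
  simp [tupleExponent, Finsupp.finsetSum_apply]

lemma sum_tupleExponent_some [DecidableEq V] (i₀ : ι) (M : Finset (ι → V)) (u : V) :
    (∑ f ∈ M, tupleExponent i₀ f) (some u) =
      #{p ∈ M ×ˢ univ.erase i₀ | p.1 p.2 = u} := by
  simp only [tupleExponent, Finsupp.finsetSum_apply, Finsupp.add_apply, Finsupp.single_apply,
    reduceCtorEq, if_false, zero_add, Option.some.injEq, card_filter, sum_product]

lemma sum_sum_tupleExponent_some [Fintype V] [DecidableEq V] (i₀ : ι) (M : Finset (ι → V)) :
    ∑ u : V, (∑ f ∈ M, tupleExponent i₀ f) (some u) = #M * (Fintype.card ι - 1) := by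
  simp only [sum_tupleExponent_some]
  rw [← card_eq_sum_card_fiberwise (fun _ _ => mem_univ _), card_product,
    card_erase_of_mem (mem_univ _), card_univ]

end TupleExponent

section DisjointTuples

variable {ι V : Type*} [DecidableEq V]

lemma card_filter_apply_eq_le_one {U : ι → Finset V}
    (hU : ∀ i j, i ≠ j → Disjoint (U i) (U j)) {M : Finset (ι → V)}
    (hMU : ∀ f ∈ M, ∀ i, f i ∈ U i) (hM : ∀ f ∈ M, ∀ g ∈ M, f ≠ g → ∀ i, f i ≠ g i)
    (T : Finset ι) (u : V) :
    #{p ∈ M ×ˢ T | p.1 p.2 = u} ≤ 1 := by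
  refine card_le_one.mpr ?_
  rintro ⟨f, i⟩ hp ⟨g, j⟩ hq
  simp only [mem_filter, mem_product] at hp hq
  obtain ⟨⟨hf, -⟩, rfl⟩ := hp
  obtain ⟨⟨hg, -⟩, hgj⟩ := hq
  have hij : i = j := by
    by_contra hij
    exact disjoint_left.mp (hU i j hij) (hMU f hf i) (hgj ▸ hMU g hg j)
  subst hij
  by_contra hfg
  exact hM f hf g hg (fun h => hfg (h ▸ rfl)) i hgj.symm

lemma apply_ne_of_card_filter_apply_eq_le_one {M : Finset (ι → V)} {T : Finset ι}
    (hM : ∀ u, #{p ∈ M ×ˢ T | p.1 p.2 = u} ≤ 1) {f g : ι → V} (hf : f ∈ M) (hg : g ∈ M)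
    (hfg : f ≠ g) {i : ι} (hi : i ∈ T) : f i ≠ g i := by
  intro he
  refine (hM (f i)).not_gt (one_lt_card.mpr ⟨(f, i), ?_, (g, i), ?_, ?_⟩)
  · simp [hf, hi]
  · simp [hg, hi, he]
  · simp [hfg]

end DisjointTuples

theorem stmt_11 (V : Type*) [Fintype V] [DecidableEq V] (m k : ℕ) (hm : 0 < m)
    (U : Fin m → Finset V)
    (hU : ∀ i j : Fin m, i ≠ j → Disjoint (U i) (U j))
    (C : Finset (Fin m → V)) (hC : ∀ f ∈ C, ∀ i : Fin m, f i ∈ U i) :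
    (∃ M ⊆ C, M.card = k ∧
        ∀ f ∈ M, ∀ g ∈ M, f ≠ g → ∀ i : Fin m, f i ≠ g i) ↔
    ∃ d ∈ (∏ u ∈ U ⟨0, hm⟩,
        (1 + ∑ f ∈ C.filter (fun f => f ⟨0, hm⟩ = u),
          MvPolynomial.X (none : Option V) *
            ∏ i ∈ Finset.univ.filter (fun i : Fin m => i ≠ ⟨0, hm⟩),
              MvPolynomial.X (some (f i)) : MvPolynomial (Option V) ℚ)).support,
      d none = k ∧ (∀ u : V, d (some u) ≤ 1) ∧
        (∑ u : V, d (some u)) = (m - 1) * k := by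
  set i₀ : Fin m := ⟨0, hm⟩
  simp_rw [filter_ne', X_none_mul_prod_X_some_eq_monomial,
    prod_one_add_sum_fiber_eq_sum_partialTransversals, ← monomial_sum_one,
    mem_support_sum_monomial_one, mem_partialTransversals]
  constructor
  · rintro ⟨M, hMC, rfl, hM⟩
    refine ⟨_, ⟨M, ⟨fun f hf => ⟨hMC hf, hC f (hMC hf) i₀⟩, ?_⟩, rfl⟩,
      sum_tupleExponent_none i₀ M, fun u => ?_, ?_⟩
    · intro f hf g hg he
      by_contra hfg
      exact hM f hf g hg hfg i₀ he
    · rw [sum_tupleExponent_some]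
      exact card_filter_apply_eq_le_one hU (fun f hf => hC f (hMC hf)) hM _ u
    · rw [sum_sum_tupleExponent_some, Fintype.card_fin, mul_comm]
  · rintro ⟨_, ⟨M, ⟨hMC, hinj⟩, rfl⟩, hk, hle, -⟩
    refine ⟨M, fun f hf => (hMC f hf).1, by rwa [sum_tupleExponent_none] at hk, ?_⟩
    intro f hf g hg hfg i
    by_cases hi : i = i₀
    · exact hi ▸ fun he => hfg (hinj f hf g hg he)
    · refine apply_ne_of_card_filter_apply_eq_le_one (fun u => ?_) hf hg hfg
        (mem_erase.mpr ⟨hi, mem_univ i⟩)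
      rw [← sum_tupleExponent_some]
      exact hle u
end

section
/- Let F be a field of characteristic 2, n ≥ k, and let w_1, ..., w_n ∈ Z_2^k. If p is a multilinear polynomial over F in y_1, ..., y_n in which every monomial with nonzero coefficient has degree strictly greater than k, then p(w_1+v_0, ..., w_n+v_0) = 0 in F[Z_2^k]. -/
open Finset AddMonoidAlgebra

lemma e_sq (k : ℕ) (F : Type*) [Field F] [CharP F 2] (v : Fin k → ZMod 2) :
    (single v (1:F) + single 0 1 : AddMonoidAlgebra F (Fin k → ZMod 2)) ^ 2 = 0 := by
  have hv : v + v = 0 := by funext i; exact CharTwo.add_self_eq_zero _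
  have h2 : (1 + 1 : F) = 0 := CharTwo.add_self_eq_zero 1
  rw [sq, add_mul, mul_add, mul_add, single_mul_single, single_mul_single,
    single_mul_single, single_mul_single, hv, add_zero, zero_add]
  simp only [one_mul, add_zero, zero_add]
  have : single 0 (1:F) + single v 1 + (single v 1 + single 0 1)
      = single 0 ((1:F)+1) + single v ((1:F)+1) := by
    rw [AddMonoidAlgebra.single_add, AddMonoidAlgebra.single_add]; ring
  rw [this, h2]; simp

lemma single_prod (k : ℕ) (F : Type*) [Field F] {ι : Type*} (T : Finset ι)
    (w : ι → (Fin k → ZMod 2)) :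
    ∏ i ∈ T, (single (w i) (1:F) : AddMonoidAlgebra F (Fin k → ZMod 2))
      = single (∑ i ∈ T, w i) 1 := by
  induction T using Finset.cons_induction with
  | empty => simp [AddMonoidAlgebra.one_def]
  | cons j T hj ih => rw [prod_cons, sum_cons, ih, single_mul_single, one_mul]

lemma prod_e_zero (k n : ℕ) (F : Type*) [Field F] [CharP F 2]
    (w : Fin n → (Fin k → ZMod 2)) (S : Finset (Fin n)) (hS : k < S.card) :
    ∏ i ∈ S, (single (w i) (1:F) + single 0 1 : AddMonoidAlgebra F (Fin k → ZMod 2)) = 0 := by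
  classical
  set e : Fin n → AddMonoidAlgebra F (Fin k → ZMod 2) :=
    fun i => single (w i) 1 + single 0 1 with he
  have hx : ∀ x : Fin k → ZMod 2, x + x = 0 := fun x => by
    funext j; exact CharTwo.add_self_eq_zero _
  -- pigeonhole: two subsets of S with equal w-sums
  obtain ⟨U, hU, V, hV, hUV, hsum⟩ :
      ∃ U ∈ S.powerset, ∃ V ∈ S.powerset, U ≠ V ∧ ∑ i ∈ U, w i = ∑ i ∈ V, w i := by
    have hcard : (Finset.univ : Finset (Fin k → ZMod 2)).card < S.powerset.card := by
      rw [Finset.card_powerset, Finset.card_univ]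
      simp only [Fintype.card_fun, Fintype.card_fin, ZMod.card]
      exact Nat.pow_lt_pow_right one_lt_two hS
    obtain ⟨U, hU, V, hV, hne, h⟩ :=
      Finset.exists_ne_map_eq_of_card_lt_of_maps_to hcard
        (f := fun U => ∑ i ∈ U, w i) (fun U _ => Finset.mem_univ _)
    exact ⟨U, hU, V, hV, hne, h⟩
  rw [Finset.mem_powerset] at hU hV
  -- T := symmetric difference, a nonempty subset of S with zero sum
  set T : Finset (Fin n) := (U \ V) ∪ (V \ U) with hT
  have hTS : T ⊆ S := Finset.union_subset
    ((Finset.sdiff_subset).trans hU) ((Finset.sdiff_subset).trans hV)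
  have hTsum : ∑ i ∈ T, w i = 0 := by
    rw [hT, Finset.sum_union disjoint_sdiff_sdiff]
    have h1 := Finset.sum_inter_add_sum_sdiff U V w
    have h2 := Finset.sum_inter_add_sum_sdiff V U w
    have key : (∑ i ∈ U \ V, w i) + (∑ i ∈ V \ U, w i)
        + ((∑ i ∈ U ∩ V, w i) + (∑ i ∈ V ∩ U, w i))
        = (∑ i ∈ U, w i) + (∑ i ∈ V, w i) := by
      rw [← h1, ← h2]; abel
    rw [Finset.inter_comm V U, hx, ← hsum, hx, add_zero] at key
    exact key
  have hTne : T.Nonempty := by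
    rw [Finset.nonempty_iff_ne_empty]
    intro h
    rw [hT, Finset.union_eq_empty, Finset.sdiff_eq_empty_iff_subset,
      Finset.sdiff_eq_empty_iff_subset] at h
    exact hUV (Finset.Subset.antisymm h.1 h.2)
  obtain ⟨j, hjT⟩ := hTne
  have hjS : j ∈ S := hTS hjT
  -- w j is the sum of the other elements of T
  have hwj : w j = ∑ i ∈ T.erase j, w i := by
    have h0 : w j + ∑ i ∈ T.erase j, w i = 0 := by
      rw [Finset.add_sum_erase _ _ hjT, hTsum]
    have := neg_eq_of_add_eq_zero_right h0
    rw [← this]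
    exact (neg_eq_of_add_eq_zero_right (hx _)).symm
  -- 1 + 1 = 0 in the algebra
  have h2A : (1 + 1 : AddMonoidAlgebra F (Fin k → ZMod 2)) = 0 := by
    rw [AddMonoidAlgebra.one_def, ← AddMonoidAlgebra.single_add,
      CharTwo.add_self_eq_zero (1:F)]
    simp
  -- e i + 1 = single (w i) 1
  have hei : ∀ i, e i + 1 = single (w i) (1:F) := by
    intro i
    rw [he]
    simp only
    rw [add_assoc, ← AddMonoidAlgebra.one_def, h2A, add_zero]
  -- expand e j as a sum over nonempty subsets of T.erase j
  have hej : e j = ∑ t ∈ (T.erase j).powerset.erase ∅, ∏ i ∈ t, e i := by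
    have hx1 : single (w j) (1:F)
        = ∏ i ∈ T.erase j, (e i + 1) := by
      rw [Finset.prod_congr rfl fun i _ => hei i, single_prod, ← hwj]
    have hexp : ∏ i ∈ T.erase j, (e i + 1)
        = ∑ t ∈ (T.erase j).powerset, ∏ i ∈ t, e i := by
      rw [Finset.prod_add]
      exact Finset.sum_congr rfl fun t _ => by simp
    have hsplit : ∑ t ∈ (T.erase j).powerset, ∏ i ∈ t, e i
        = 1 + ∑ t ∈ (T.erase j).powerset.erase ∅, ∏ i ∈ t, e i := by
      rw [← Finset.add_sum_erase _ _ (Finset.empty_mem_powerset _), Finset.prod_empty]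
    have : e j + 1 = single (w j) (1:F) := hei j
    have hgoal : e j + 1 = 1 + ∑ t ∈ (T.erase j).powerset.erase ∅, ∏ i ∈ t, e i := by
      rw [this, hx1, hexp, hsplit]
    calc e j = e j + (1 + 1) := by rw [h2A, add_zero]
      _ = (e j + 1) + 1 := by ring
      _ = (1 + ∑ t ∈ (T.erase j).powerset.erase ∅, ∏ i ∈ t, e i) + 1 := by rw [hgoal]
      _ = (1 + 1) + ∑ t ∈ (T.erase j).powerset.erase ∅, ∏ i ∈ t, e i := by ring
      _ = ∑ t ∈ (T.erase j).powerset.erase ∅, ∏ i ∈ t, e i := by rw [h2A, zero_add]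
  -- final computation
  show ∏ i ∈ S, e i = 0
  rw [← Finset.mul_prod_erase _ _ hjS, hej, Finset.sum_mul]
  apply Finset.sum_eq_zero
  intro t ht
  rw [Finset.mem_erase, Finset.mem_powerset] at ht
  obtain ⟨htne, htsub⟩ := ht
  obtain ⟨x, hxt⟩ := Finset.nonempty_iff_ne_empty.mpr htne
  have hxS : x ∈ S.erase j := Finset.erase_subset_erase _ hTS (htsub hxt)
  have d1 : e x ∣ ∏ i ∈ t, e i := Finset.dvd_prod_of_mem _ hxt
  have d2 : e x ∣ ∏ i ∈ S.erase j, e i := Finset.dvd_prod_of_mem _ hxS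
  have : e x ^ 2 ∣ (∏ i ∈ t, e i) * ∏ i ∈ S.erase j, e i := by
    rw [sq]; exact mul_dvd_mul d1 d2
  have hz : e x ^ 2 = 0 := by simp only [he]; exact e_sq k F (w x)
  rw [hz] at this
  exact zero_dvd_iff.mp this

theorem stmt_18 (k n : ℕ) (F : Type*) [Field F] [CharP F 2] (hn : k ≤ n)
    (p : MvPolynomial (Fin n) F)
    (hml : ∀ d ∈ p.support, ∀ i, d i ≤ 1)
    (hdeg : ∀ d ∈ p.support, k < d.sum fun _ e => e)
    (w : Fin n → (Fin k → ZMod 2)) :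
    MvPolynomial.aeval
      (fun i => (AddMonoidAlgebra.single (w i) (1 : F) + AddMonoidAlgebra.single 0 1 :
        AddMonoidAlgebra F (Fin k → ZMod 2))) p = 0 := by
  classical
  rw [MvPolynomial.aeval_def, MvPolynomial.eval₂_eq]
  apply Finset.sum_eq_zero
  intro d hd
  have hone : ∀ i ∈ d.support, d i = 1 := fun i hi =>
    le_antisymm (hml d hd i) (Nat.one_le_iff_ne_zero.mpr (Finsupp.mem_support_iff.mp hi))
  have hsum : (d.sum fun _ e => e) = d.support.card := by
    rw [Finsupp.sum, Finset.sum_congr rfl hone, Finset.sum_const, smul_eq_mul, mul_one]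
  have hcard : k < d.support.card := hsum ▸ hdeg d hd
  have hprod : (∏ i ∈ d.support,
      (single (w i) (1:F) + single 0 1 : AddMonoidAlgebra F (Fin k → ZMod 2)) ^ d i)
      = ∏ i ∈ d.support,
        (single (w i) (1:F) + single 0 1 : AddMonoidAlgebra F (Fin k → ZMod 2)) :=
    Finset.prod_congr rfl fun i hi => by rw [hone i hi, pow_one]
  rw [hprod, prod_e_zero k n F w d.support hcard, mul_zero]
end
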